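/- arXiv:2010.00371 — 3 statements merged into one kernel-verified Lean document; each statement's English description precedes it below -/
import Mathlib

section
/- Let X = (x_1 ≥ … ≥ x_N) and Y = (y_1 ≥ … ≥ y_M) be 0-dimensional persistence diagrams with N < M. If max_{1 ≤ i ≤ N} |x_i − y_i| ≤ y_{N+1}/2, then d_B(X,Y) = y_{N+1}/2. -/
open Classical in
/-- Penalty of each point of the two diagrams under a partial matching `f`:
a point `x i` matched to `y j` incurs `|x i - y j|`; an unmatched `x i`
(matched to the diagonal) incurs `x i / 2`; an unmatched `y j` incurs `y j / 2`
(a `y j` in the range of `f` is already accounted for, so it incurs `0`). -/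
noncomputable def diagPenalty {N M : ℕ} (x : Fin N → ℝ) (y : Fin M → ℝ)
    (f : Fin N → Option (Fin M)) : Fin N ⊕ Fin M → ℝ
  | Sum.inl i => (f i).elim (x i / 2) (fun j => |x i - y j|)
  | Sum.inr j => if ∃ i, f i = some j then 0 else y j / 2

/-- The cost of a partial matching: the maximum of `|x i - y j|` over matched
pairs, of `x i / 2` over unmatched `i`, and of `y j / 2` over unmatched `j`. -/
noncomputable def matchCost {N M : ℕ} (x : Fin N → ℝ) (y : Fin M → ℝ)
    (f : Fin N → Option (Fin M)) : ℝ :=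
  ⨆ k, diagPenalty x y f k

/-- `f : Fin N → Option (Fin M)` is a partial matching when it is injective on
matched indices, i.e. it induces a bijection between a subset of `Fin N` and a
subset of `Fin M`. -/
def IsPartialMatching {N M : ℕ} (f : Fin N → Option (Fin M)) : Prop :=
  ∀ i i' j, f i = some j → f i' = some j → i = i'

/-- The bottleneck distance between two 0-dimensional persistence diagrams,
given by their (decreasing) sequences of death times: the minimum cost over
all partial matchings. -/
noncomputable def bottleneck {N M : ℕ} (x : Fin N → ℝ) (y : Fin M → ℝ) : ℝ :=
  ⨅ f : {f : Fin N → Option (Fin M) // IsPartialMatching f}, matchCost x y f.1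

/-
Any partial matching leaves one of the N + 1 largest points y₁, …, y_{N+1} of Y unmatched
(pigeonhole: X has only N points, each matched to at most one point), and since Y is
decreasing that point costs at least y_{N+1}/2. Conversely, the rank matching xᵢ ↔ yᵢ costs
at most y_{N+1}/2: by hypothesis on the matched pairs, and because the unmatched points
y_{N+1}, y_{N+2}, … are at most y_{N+1}.
-/

section

variable {N M : ℕ} {x : Fin N → ℝ} {y : Fin M → ℝ} {f : Fin N → Option (Fin M)}

lemma diagPenalty_le_matchCost (k : Fin N ⊕ Fin M) : diagPenalty x y f k ≤ matchCost x y f :=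
  le_ciSup (Finite.bddAbove_range _) k

lemma matchCost_le {c : ℝ} (hc : 0 ≤ c) (hk : ∀ k, diagPenalty x y f k ≤ c) :
    matchCost x y f ≤ c :=
  Real.iSup_le hk hc

lemma exists_unmatched_le_of_lt (f : Fin N → Option (Fin M)) (hNM : N < M) :
    ∃ j : Fin M, (j : ℕ) ≤ N ∧ ∀ i, f i ≠ some j := by
  by_contra! hmatched
  choose g hg using fun j : Fin (N + 1) => hmatched (Fin.castLE hNM j) (Nat.lt_succ_iff.mp j.isLt)
  have hg_inj : Function.Injective g := fun a b hab =>
    Fin.castLE_injective _ (Option.some_injective _ ((hg a).symm.trans (hab ▸ hg b)))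
  simpa using Fintype.card_le_of_injective g hg_inj

lemma half_le_matchCost (f : Fin N → Option (Fin M)) (hy : Antitone y) (hNM : N < M) :
    y ⟨N, hNM⟩ / 2 ≤ matchCost x y f := by
  obtain ⟨j, hjN, hj⟩ := exists_unmatched_le_of_lt f hNM
  have hpenalty : diagPenalty x y f (Sum.inr j) = y j / 2 := by
    simp [diagPenalty, hj]
  have hyj : y ⟨N, hNM⟩ ≤ y j := hy (Fin.mk_le_mk.mpr hjN)
  calc y ⟨N, hNM⟩ / 2 ≤ y j / 2 := by linarith
    _ = diagPenalty x y f (Sum.inr j) := hpenalty.symm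
    _ ≤ matchCost x y f := diagPenalty_le_matchCost _

lemma bottleneck_eq_of_matchCost_le {c : ℝ}
    (hlow : ∀ f : Fin N → Option (Fin M), c ≤ matchCost x y f)
    (hf : IsPartialMatching f) (hup : matchCost x y f ≤ c) : bottleneck x y = c := by
  have : Nonempty {f : Fin N → Option (Fin M) // IsPartialMatching f} := ⟨⟨f, hf⟩⟩
  refine le_antisymm (ciInf_le_of_le ⟨c, ?_⟩ ⟨f, hf⟩ hup) (le_ciInf fun g => hlow g.1)
  rintro _ ⟨g, rfl⟩
  exact hlow g.1

end

def rankMatching {N M : ℕ} (hNM : N ≤ M) : Fin N → Option (Fin M) :=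
  fun i => some (Fin.castLE hNM i)

lemma isPartialMatching_rankMatching {N M : ℕ} (hNM : N ≤ M) :
    IsPartialMatching (rankMatching hNM) := fun _ _ _ hi hi' =>
  Fin.castLE_injective _ (Option.some_injective _ (hi.trans hi'.symm))

lemma matchCost_rankMatching_le {N M : ℕ} (hNM : N ≤ M) (x : Fin N → ℝ) (y : Fin M → ℝ)
    {c : ℝ} (hc : 0 ≤ c) (hpair : ∀ i, |x i - y (Fin.castLE hNM i)| ≤ c)
    (htail : ∀ j : Fin M, N ≤ (j : ℕ) → y j / 2 ≤ c) :
    matchCost x y (rankMatching hNM) ≤ c := by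
  refine matchCost_le hc ?_
  rintro (i | j)
  · simpa [diagPenalty, rankMatching] using hpair i
  · by_cases hjN : N ≤ (j : ℕ)
    · have hj : ¬ ∃ i, rankMatching hNM i = some j := by
        rintro ⟨i, hi⟩
        have : (i : ℕ) = j := congrArg Fin.val (Option.some_injective _ hi)
        omega
      simpa [diagPenalty, hj] using htail j hjN
    · have hj : ∃ i, rankMatching hNM i = some j := ⟨⟨j, by omega⟩, rfl⟩
      simpa [diagPenalty, hj] using hc

theorem lumawig_lemma1_general {N M : ℕ} (hNM : N < M)
    (x : Fin N → ℝ) (y : Fin M → ℝ)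
    (hy : Antitone y)
    (hypos : ∀ j, 0 < y j)
    (h : ∀ i : Fin N, |x i - y (Fin.castLE hNM.le i)| ≤ y ⟨N, hNM⟩ / 2) :
    bottleneck x y = y ⟨N, hNM⟩ / 2 := by
  have htail : ∀ j : Fin M, N ≤ (j : ℕ) → y j / 2 ≤ y ⟨N, hNM⟩ / 2 := fun j hj => by
    linarith [hy (Fin.mk_le_mk.mpr hj : (⟨N, hNM⟩ : Fin M) ≤ j)]
  exact bottleneck_eq_of_matchCost_le (fun f => half_le_matchCost f hy hNM)
    (isPartialMatching_rankMatching hNM.le)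
    (matchCost_rankMatching_le hNM.le x y (half_pos (hypos _)).le h htail)

/-- If `N < M` and every rank-matched difference `|x i - y i|`
is at most `y (N+1) / 2`, then the bottleneck distance equals `y (N+1) / 2`. -/
theorem lumawig_lemma1 {N M : ℕ} (hNM : N < M)
    (x : Fin N → ℝ) (y : Fin M → ℝ)
    (hx : Antitone x) (hy : Antitone y)
    (hxpos : ∀ i, 0 < x i) (hypos : ∀ j, 0 < y j)
    (h : ∀ i : Fin N, |x i - y (Fin.castLE hNM.le i)| ≤ y ⟨N, hNM⟩ / 2) :
    bottleneck x y = y ⟨N, hNM⟩ / 2 :=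
  lumawig_lemma1_general hNM x y hy hypos h
end

section
/- Let X = (x_1 ≥ … ≥ x_N) and Y = (y_1 ≥ … ≥ y_N) be 0-dimensional persistence diagrams with the same number N ≥ 2 of points. Suppose max(x_l, y_l)/2 < max(Z), ζ ≥ max(x_l, y_l)/2, and there exists m < l with z_m ≥ max(x_l, y_l)/2. Then the partial matching τ that matches x_j to y_j for all j < l and sends x_j and y_j to the diagonal for all j ≥ l has cost equal to max( max_{j < l} z_j , max(x_l, y_l)/2 ), and this cost is strictly less than max(Z), the cost of the rank-ordered matching φ that matches x_i to y_i for every i. -/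
/-!
The rank-ordered matching pays exactly `max Z`. The truncated matching `τ` pays `z_j` for
`j < l` and, the diagrams being decreasing, at most `max (x_l, y_l) / 2` for every point sent
to the diagonal, with equality at index `l`. As `l` is the least index attaining `max Z`, every
`z_j` with `j < l` lies strictly below `max Z`, and so does `max (x_l, y_l) / 2` by hypothesis.
-/

theorem iSup_subtype_lt_iSup_of_forall_ne {ι : Type*} [Finite ι] {f : ι → ℝ} {p : ι → Prop}
    [Nonempty {i // p i}] (h : ∀ i, p i → f i ≠ ⨆ j, f j) :
    ⨆ i : {i // p i}, f i < ⨆ i, f i := by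
  obtain ⟨i₀, hi₀⟩ := Finite.exists_max fun i : {i // p i} => f i
  calc ⨆ i : {i // p i}, f i ≤ f i₀ := ciSup_le hi₀
    _ < ⨆ i, f i := (le_ciSup (Set.finite_range f).bddAbove i₀.1).lt_of_ne (h i₀.1 i₀.2)

namespace PersistenceDiagram

variable {N : ℕ} (x y : Fin N → ℝ)

theorem matchCost_some_eq_iSup :
    matchCost x y (fun i => some i) = ⨆ i, |x i - y i| := by
  have hpen : ∀ k, 0 ≤ diagPenalty x y (fun i => some i) k := by
    rintro (i | j) <;> simp [diagPenalty]
  have hbdd : BddAbove (Set.range (diagPenalty x y fun i => some i)) :=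
    (Set.finite_range _).bddAbove
  refine le_antisymm (Real.iSup_le ?_ (Real.iSup_nonneg fun _ => abs_nonneg _)) ?_
  · rintro (i | j)
    · exact le_ciSup (f := fun i => |x i - y i|) (Set.finite_range _).bddAbove i
    · simpa [diagPenalty] using Real.iSup_nonneg fun i => abs_nonneg (x i - y i)
  · exact Real.iSup_le (fun i => le_ciSup hbdd (Sum.inl i)) (Real.iSup_nonneg hpen)

def rankMatchingBelow (l : Fin N) : Fin N → Option (Fin N) :=
  fun j => if j < l then some j else none

variable {x y} {l : Fin N}

theorem exists_rankMatchingBelow_eq_some_iff (j : Fin N) :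
    (∃ i, rankMatchingBelow l i = some j) ↔ j < l := by
  simp [rankMatchingBelow]

theorem diagPenalty_rankMatchingBelow_inl (i : Fin N) :
    diagPenalty x y (rankMatchingBelow l) (.inl i) = if i < l then |x i - y i| else x i / 2 := by
  by_cases hi : i < l <;> simp [diagPenalty, rankMatchingBelow, hi]

theorem diagPenalty_rankMatchingBelow_inr (j : Fin N) :
    diagPenalty x y (rankMatchingBelow l) (.inr j) = if j < l then 0 else y j / 2 := by
  simp only [diagPenalty, exists_rankMatchingBelow_eq_some_iff]

theorem diagPenalty_rankMatchingBelow_le (hx : Antitone x) (hy : Antitone y) {m : Fin N}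
    (hm : m < l) (k : Fin N ⊕ Fin N) :
    diagPenalty x y (rankMatchingBelow l) k ≤
      max (⨆ j : {j : Fin N // j < l}, |x j.1 - y j.1|) (max (x l) (y l) / 2) := by
  have hzle (j : Fin N) (hj : j < l) :
      |x j - y j| ≤ ⨆ j : {j : Fin N // j < l}, |x j.1 - y j.1| :=
    le_ciSup (f := fun j : {j : Fin N // j < l} => |x j.1 - y j.1|)
      (Set.finite_range _).bddAbove ⟨j, hj⟩
  rcases k with i | j
  · rw [diagPenalty_rankMatchingBelow_inl]
    split_ifs with hi
    · exact le_max_of_le_left (hzle i hi)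
    · refine le_max_of_le_right ?_
      have := hx (not_lt.1 hi)
      have := le_max_left (x l) (y l)
      linarith
  · rw [diagPenalty_rankMatchingBelow_inr]
    split_ifs with hj
    · exact le_max_of_le_left ((abs_nonneg _).trans (hzle m hm))
    · refine le_max_of_le_right ?_
      have := hy (not_lt.1 hj)
      have := le_max_right (x l) (y l)
      linarith

theorem matchCost_rankMatchingBelow (hx : Antitone x) (hy : Antitone y) (hl : ∃ m, m < l) :
    matchCost x y (rankMatchingBelow l) =
      max (⨆ j : {j : Fin N // j < l}, |x j.1 - y j.1|) (max (x l) (y l) / 2) := by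
  obtain ⟨m, hm⟩ := hl
  have : Nonempty (Fin N) := ⟨l⟩
  have : Nonempty {j : Fin N // j < l} := ⟨⟨m, hm⟩⟩
  have hpen (k) : diagPenalty x y (rankMatchingBelow l) k ≤ matchCost x y (rankMatchingBelow l) :=
    le_ciSup (Set.finite_range _).bddAbove k
  refine le_antisymm (ciSup_le (diagPenalty_rankMatchingBelow_le hx hy hm)) ?_
  refine max_le (ciSup_le fun j => ?_) ?_
  · simpa [diagPenalty_rankMatchingBelow_inl, j.2] using hpen (.inl j.1)
  · rw [← max_div_div_right zero_le_two]
    refine max_le ?_ ?_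
    · simpa [diagPenalty_rankMatchingBelow_inl] using hpen (.inl l)
    · simpa [diagPenalty_rankMatchingBelow_inr] using hpen (.inr l)

end PersistenceDiagram

theorem lumawig_lemma2_case4_general {N : ℕ}
    (x y : Fin N → ℝ)
    (hx : Antitone x) (hy : Antitone y)
    (l : Fin N)
    (hlleast : ∀ i, |x i - y i| = (⨆ j, |x j - y j|) → l ≤ i)
    (hmax : max (x l) (y l) / 2 < ⨆ i, |x i - y i|)
    (hm : ∃ m : Fin N, m < l ∧ max (x l) (y l) / 2 ≤ |x m - y m|) :
    matchCost x y (fun j => if j < l then some j else none) =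
      max (⨆ j : {j : Fin N // j < l}, |x j.1 - y j.1|) (max (x l) (y l) / 2) ∧
    max (⨆ j : {j : Fin N // j < l}, |x j.1 - y j.1|) (max (x l) (y l) / 2) <
      (⨆ i, |x i - y i|) ∧
    matchCost x y (fun i => some i) = ⨆ i, |x i - y i| := by
  obtain ⟨m, hml, -⟩ := hm
  have : Nonempty {j : Fin N // j < l} := ⟨⟨m, hml⟩⟩
  have hbelow_lt : ⨆ j : {j : Fin N // j < l}, |x j.1 - y j.1| < ⨆ i, |x i - y i| :=
    iSup_subtype_lt_iSup_of_forall_ne fun j hj hmaxj => (hlleast j hmaxj).not_gt hj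
  exact ⟨PersistenceDiagram.matchCost_rankMatchingBelow hx hy ⟨m, hml⟩, max_lt hbelow_lt hmax,
    PersistenceDiagram.matchCost_some_eq_iSup x y⟩

/-- (Lemma 2, case 4.) For diagrams with the same number
`N ≥ 2` of points, if `max (x l) (y l) / 2 < max Z`, `ζ ≥ max (x l) (y l) / 2`,
and some `m < l` has `z m ≥ max (x l) (y l) / 2`, then the matching `τ`
(matching `x j` to `y j` for `j < l`, and sending `x j`, `y j` to the diagonal
for `j ≥ l`) has cost `max (max_{j < l} z j) (max (x l) (y l) / 2)`, which is
strictly less than `max Z`, the cost of the rank-ordered matching `φ`. -/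
theorem lumawig_lemma2_case4 {N : ℕ} (hN : 2 ≤ N)
    (x y : Fin N → ℝ)
    (hx : Antitone x) (hy : Antitone y)
    (hxpos : ∀ i, 0 < x i) (hypos : ∀ i, 0 < y i)
    (l : Fin N)
    (hl : |x l - y l| = ⨆ i, |x i - y i|)
    (hlleast : ∀ i, |x i - y i| = (⨆ j, |x j - y j|) → l ≤ i)
    (hmax : max (x l) (y l) / 2 < ⨆ i, |x i - y i|)
    (hζ : max (x l) (y l) / 2 ≤ ⨆ i : {i : Fin N // i ≠ l}, |x i.1 - y i.1|)
    (hm : ∃ m : Fin N, m < l ∧ max (x l) (y l) / 2 ≤ |x m - y m|) :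
    matchCost x y (fun j => if j < l then some j else none) =
      max (⨆ j : {j : Fin N // j < l}, |x j.1 - y j.1|) (max (x l) (y l) / 2) ∧
    max (⨆ j : {j : Fin N // j < l}, |x j.1 - y j.1|) (max (x l) (y l) / 2) <
      (⨆ i, |x i - y i|) ∧
    matchCost x y (fun i => some i) = ⨆ i, |x i - y i| :=
  lumawig_lemma2_case4_general x y hx hy l hlleast hmax hm
end

section
/- Let x_1 ≥ x_2 ≥ … ≥ x_n and y_1 ≥ y_2 ≥ … ≥ y_n be two non-increasing finite sequences of real numbers. Then for every permutation σ of {1,…,n}, max_{1 ≤ i ≤ n} |x_i − y_i| ≤ max_{1 ≤ i ≤ n} |x_i − y_{σ(i)}|; that is, among all bijections matching the two sequences point-to-point, matching by rank order minimizes the maximum absolute difference between matched values. -/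
/-!
An injective `σ` cannot map `Iic i` into the smaller set `Iio i`, so some `j ≤ i` has
`i ≤ σ j`; dually some `k ≥ i` has `σ k ≤ i`. Monotonicity then gives
`x i - y i ≤ x j - y (σ j)` and `y i - x i ≤ y (σ k) - x k`, so every
rank-order gap is dominated by a gap of `σ`.
-/

namespace Equiv.Perm

variable {α : Type*} [LinearOrder α]

theorem exists_le_and_le_apply [LocallyFiniteOrderBot α] (σ : Perm α) (i : α) :
    ∃ j ≤ i, i ≤ σ j := by
  by_contra! h
  have hmaps : Set.MapsTo σ (Finset.Iic i) (Finset.Iio i) := fun j hj ↦ by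
    simpa using h j (by simpa using hj)
  have hlt : (Finset.Iio i).card < (Finset.Iic i).card := by
    rw [← Finset.Iic_erase]
    exact Finset.card_erase_lt_of_mem (Finset.mem_Iic.2 le_rfl)
  exact hlt.not_ge (Finset.card_le_card_of_injOn σ hmaps σ.injective.injOn)

theorem exists_ge_and_apply_le [LocallyFiniteOrderTop α] (σ : Perm α) (i : α) :
    ∃ k, i ≤ k ∧ σ k ≤ i :=
  exists_le_and_le_apply (α := αᵒᵈ) σ i

end Equiv.Perm

theorem abs_sub_le_of_antitone_of_perm {α : Type*} [LinearOrder α]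
    [LocallyFiniteOrderBot α] [LocallyFiniteOrderTop α] {x y : α → ℝ}
    (hx : Antitone x) (hy : Antitone y) (σ : Equiv.Perm α) {M : ℝ}
    (hM : ∀ j, |x j - y (σ j)| ≤ M) (i : α) : |x i - y i| ≤ M := by
  obtain ⟨j, hji, hiσj⟩ := σ.exists_le_and_le_apply i
  obtain ⟨k, hik, hσki⟩ := σ.exists_ge_and_apply_le i
  rw [abs_sub_le_iff]
  constructor
  · calc x i - y i ≤ x j - y (σ j) := sub_le_sub (hx hji) (hy hiσj)
      _ ≤ M := (le_abs_self _).trans (hM j)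
  · calc y i - x i ≤ y (σ k) - x k := sub_le_sub (hy hσki) (hx hik)
      _ ≤ M := ((le_abs_self _).trans_eq (abs_sub_comm _ _)).trans (hM k)

/-- For two non-increasing finite sequences of reals of the
same length, matching by rank order minimizes, over all permutations `σ`, the
maximum absolute difference between matched values. -/
theorem rank_order_matching_optimal {n : ℕ} (x y : Fin n → ℝ)
    (hx : Antitone x) (hy : Antitone y) (σ : Equiv.Perm (Fin n)) :
    (⨆ i, |x i - y i|) ≤ ⨆ i, |x i - y (σ i)| :=
  Real.iSup_le
    (abs_sub_le_of_antitone_of_perm hx hy σ fun j ↦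
      le_ciSup (Finite.bddAbove_range fun i ↦ |x i - y (σ i)|) j)
    (Real.iSup_nonneg fun _ ↦ abs_nonneg _)
end
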